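/- Fix d ≥ 1. In the algebra à = ⟨c_1, …, c_d | c_i c_j = c_{i+j} for i+j ≤ d; c_i c_j = c_k c_l for d+1 ≤ i+j = k+l ≤ 2d⟩, the set of monomials {c_d^l c_k : l ≥ 0, 0 ≤ k ≤ d} (with c_0 interpreted as 1) spans à as a k-vector space, and for each total weight w (where c_k has weight k) there is exactly one such monomial of weight w. -/
import Mathlib

namespace Stmt3

noncomputable def gen (k : Type) [Field k] (d : ℕ) (i : ℕ) : FreeAlgebra k (Fin d) :=
  if h : 1 ≤ i ∧ i ≤ d then FreeAlgebra.ι k (⟨i - 1, by omega⟩ : Fin d) else 0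

/-- `c_i` with the convention `c_0 = 1`. -/
noncomputable def cbar (k : Type) [Field k] (d : ℕ) (i : ℕ) : FreeAlgebra k (Fin d) :=
  if i = 0 then 1 else gen k d i

inductive Rel (k : Type) [Field k] (d : ℕ) :
    FreeAlgebra k (Fin d) → FreeAlgebra k (Fin d) → Prop
  | low (i j : ℕ) (hi : 1 ≤ i) (hj : 1 ≤ j) (hij : i + j ≤ d) :
      Rel k d (gen k d i * gen k d j) (gen k d (i + j))
  | high (i j p l : ℕ) (hi : 1 ≤ i) (hi' : i ≤ d) (hj : 1 ≤ j) (hj' : j ≤ d)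
      (hp : 1 ≤ p) (hp' : p ≤ d) (hl : 1 ≤ l) (hl' : l ≤ d)
      (hlow : d + 1 ≤ i + j) (heq : i + j = p + l) (hhigh : i + j ≤ 2 * d) :
      Rel k d (gen k d i * gen k d j) (gen k d p * gen k d l)

variable (k : Type) [Field k] (d : ℕ)

lemma cbar_zero : cbar k d 0 = 1 := rfl

lemma cbar_pos {i : ℕ} (hi : 1 ≤ i) : cbar k d i = gen k d i := by
  simp [cbar, Nat.one_le_iff_ne_zero.mp hi]

/-- Key reduction: multiplying a normal form on the right by a generator gives a normal form. -/
lemma key (hd : 1 ≤ d) (l a i : ℕ) (ha : a ≤ d) (hi1 : 1 ≤ i) (hi2 : i ≤ d) :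
    ∃ l' a', a' ≤ d ∧
      RingQuot.mkAlgHom k (Rel k d) (gen k d d ^ l * cbar k d a) *
        RingQuot.mkAlgHom k (Rel k d) (gen k d i)
      = RingQuot.mkAlgHom k (Rel k d) (gen k d d ^ l' * cbar k d a') := by
  rcases Nat.eq_zero_or_pos a with h0 | hpos
  · refine ⟨l, i, hi2, ?_⟩
    subst h0
    rw [cbar_zero, mul_one, ← map_mul, cbar_pos k d hi1]
  · rcases le_or_gt (a + i) d with hle | hgt
    · refine ⟨l, a + i, hle, ?_⟩
      have h := RingQuot.mkAlgHom_rel k (Rel.low (k := k) a i hpos hi1 hle)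
      rw [cbar_pos k d hpos, cbar_pos k d (by omega : 1 ≤ a + i)]
      rw [map_mul, map_mul, mul_assoc, ← map_mul, h]
    · refine ⟨l + 1, a + i - d, by omega, ?_⟩
      have h := RingQuot.mkAlgHom_rel k
        (Rel.high (k := k) a i d (a + i - d) hpos ha hi1 hi2 hd le_rfl
          (by omega) (by omega) (by omega) (by omega) (by omega))
      rw [cbar_pos k d hpos, cbar_pos k d (by omega : 1 ≤ a + i - d)]
      rw [map_mul, map_mul, mul_assoc, ← map_mul, h, pow_succ, map_mul, map_mul]
      exact (mul_assoc _ _ _).symm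

theorem stmt3 (k : Type) [Field k] [CharZero k] (d : ℕ) (hd : 1 ≤ d) :
    (Submodule.span k {a : RingQuot (Rel k d) |
        ∃ l k' : ℕ, k' ≤ d ∧
          a = RingQuot.mkAlgHom k (Rel k d) (gen k d d ^ l * cbar k d k')} = ⊤)
    ∧ ∀ w : ℕ, ∃! m : FreeAlgebra k (Fin d),
        ∃ l k' : ℕ, k' ≤ d ∧ l * d + k' = w ∧ m = gen k d d ^ l * cbar k d k' := by
  constructor
  · -- spanning
    set S : Set (RingQuot (Rel k d)) := {a : RingQuot (Rel k d) |
        ∃ l k' : ℕ, k' ≤ d ∧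
          a = RingQuot.mkAlgHom k (Rel k d) (gen k d d ^ l * cbar k d k')} with hS
    set G : Set (RingQuot (Rel k d)) :=
      Set.range (fun i : Fin d => RingQuot.mkAlgHom k (Rel k d) (FreeAlgebra.ι k i)) with hG
    -- every element of the monoid closure of G lies in S
    have hmul : ∀ x ∈ Submonoid.closure G, ∀ l a : ℕ, a ≤ d →
        RingQuot.mkAlgHom k (Rel k d) (gen k d d ^ l * cbar k d a) * x ∈ S := by
      intro x hx
      induction hx using Submonoid.closure_induction with
      | one => intro l a ha; rw [mul_one]; exact ⟨l, a, ha, rfl⟩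
      | mul x y hx hy ihx ihy =>
        intro l a ha
        rw [← mul_assoc]
        obtain ⟨l', a', ha', heq⟩ := ihx l a ha
        rw [heq]
        exact ihy l' a' ha'
      | mem x hxG =>
        intro l a ha
        obtain ⟨i, rfl⟩ := hxG
        show RingQuot.mkAlgHom k (Rel k d) (gen k d d ^ l * cbar k d a) *
          RingQuot.mkAlgHom k (Rel k d) (FreeAlgebra.ι k i) ∈ S
        have hgen : FreeAlgebra.ι k i = gen k d ((i : ℕ) + 1) := by
          have hi : 1 ≤ (i : ℕ) + 1 ∧ (i : ℕ) + 1 ≤ d := ⟨by omega, by omega⟩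
          simp only [gen, dif_pos hi]
          congr 1
        rw [hgen]
        obtain ⟨l', a', ha', heq⟩ := key k d hd l a ((i : ℕ) + 1) ha (by omega) (by omega)
        exact ⟨l', a', ha', heq⟩
    have hclosure : (Submonoid.closure G : Set (RingQuot (Rel k d))) ⊆ S := by
      intro x hx
      have := hmul x hx 0 0 (by omega)
      rwa [pow_zero, cbar_zero, mul_one, map_one, one_mul] at this
    -- the subalgebra adjoin of G is everything
    have hadj : Algebra.adjoin k G = ⊤ := by
      have h1 : (Algebra.adjoin k (Set.range (FreeAlgebra.ι k : Fin d → _))).map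
          (RingQuot.mkAlgHom k (Rel k d)) = ⊤ := by
        rw [FreeAlgebra.adjoin_range_ι, Algebra.map_top,
          (AlgHom.range_eq_top _).mpr (RingQuot.mkAlgHom_surjective k (Rel k d))]
      rw [AlgHom.map_adjoin, ← Set.range_comp] at h1
      exact h1
    have hspan : Subalgebra.toSubmodule (Algebra.adjoin k G) = Submodule.span k
        (Submonoid.closure G : Set (RingQuot (Rel k d))) := Algebra.adjoin_eq_span k G
    rw [eq_top_iff]
    calc (⊤ : Submodule k (RingQuot (Rel k d)))
        = Subalgebra.toSubmodule (Algebra.adjoin k G) := by rw [hadj]; rfl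
      _ = Submodule.span k (Submonoid.closure G : Set (RingQuot (Rel k d))) := hspan
      _ ≤ Submodule.span k S := Submodule.span_mono hclosure
  · -- unique monomial of each weight
    intro w
    refine ⟨gen k d d ^ (w / d) * cbar k d (w % d), ⟨w / d, w % d,
      le_of_lt (Nat.mod_lt _ (by omega)), by
        rw [Nat.mul_comm]; exact Nat.div_add_mod w d, rfl⟩, ?_⟩
    rintro m ⟨l, k', hk', hw, rfl⟩
    rcases Nat.lt_or_ge k' d with hlt | hge
    · -- k' < d forces k' = w % d and l = w / d
      have h1 : w % d = k' := by
        rw [← hw, Nat.mul_comm, Nat.mul_add_mod, Nat.mod_eq_of_lt hlt]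
      have h2 : w / d = l := by
        rw [← hw, Nat.mul_comm, Nat.mul_add_div (by omega), Nat.div_eq_of_lt hlt, Nat.add_zero]
      rw [h1, h2]
    · -- k' = d : gen^l * cbar d = gen^(l+1) * cbar 0
      have hkd : k' = d := le_antisymm hk' hge
      have hw' : w = (l + 1) * d := by rw [← hw, hkd]; ring
      have h1 : w % d = 0 := by rw [hw']; exact Nat.mul_mod_left _ _
      have h2 : w / d = l + 1 := by rw [hw']; exact Nat.mul_div_cancel _ (by omega)
      rw [h1, h2, cbar_zero, mul_one, pow_succ, hkd, cbar_pos k d hd]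

end Stmt3
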